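/- For every q ∈ (0,1), every L ≥ 1 and every z ∈ ℂ, the kink product vector φ(z) = ⊗_{x=0}^{L}(|↑⟩ + z q^x |↓⟩) satisfies H_L φ(z) = 0; moreover H_L is positive semidefinite, so 0 is the smallest eigenvalue of H_L and every φ(z) is a ground state vector of H_L. -/

import Mathlib

open Matrix Kronecker ComplexOrder

noncomputable section

/-- Spin-1/2 matrix `S¹ = (1/2)[[0,1],[1,0]]`. -/
def S1 : Matrix (Fin 2) (Fin 2) ℂ := !![0, 1/2; 1/2, 0]

/-- Spin-1/2 matrix `S² = (1/2)[[0,−i],[i,0]]`. -/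
def S2 : Matrix (Fin 2) (Fin 2) ℂ := !![0, -Complex.I/2; Complex.I/2, 0]

/-- Spin-1/2 matrix `S³ = (1/2)[[1,0],[0,−1]]`. -/
def S3 : Matrix (Fin 2) (Fin 2) ℂ := !![1/2, 0; 0, -1/2]

/-- The anisotropy `Δ = (q + q⁻¹)/2`. -/
def Delta (q : ℝ) : ℝ := (q + q⁻¹) / 2

/-- The boundary field `B = (1 − q²)/(2(1 + q²)) = (1/2)√(1 − 1/Δ²)`. -/
def Bfield (q : ℝ) : ℝ := (1 - q ^ 2) / (2 * (1 + q ^ 2))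

/-- The two-site kink Hamiltonian
`h(Δ) = (1/4)·𝟙⊗𝟙 − S³⊗S³ − Δ⁻¹(S¹⊗S¹ + S²⊗S²) + B(S³⊗𝟙 − 𝟙⊗S³)` on `ℂ²⊗ℂ²`. -/
def hKink (q : ℝ) : Matrix (Fin 2 × Fin 2) (Fin 2 × Fin 2) ℂ :=
  (1 / 4 : ℂ) • (1 : Matrix (Fin 2 × Fin 2) (Fin 2 × Fin 2) ℂ)
    - S3 ⊗ₖ S3 - ((Delta q : ℂ))⁻¹ • (S1 ⊗ₖ S1 + S2 ⊗ₖ S2)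
    + (Bfield q : ℂ) • (S3 ⊗ₖ (1 : Matrix (Fin 2) (Fin 2) ℂ)
        - (1 : Matrix (Fin 2) (Fin 2) ℂ) ⊗ₖ S3)

/-- The operator acting as the two-site matrix `M` on the tensor factors of the sites
`a` and `b` (in this order) and as the identity on all other factors. -/
def twoSiteOp {ι : Type*} [Fintype ι] [DecidableEq ι]
    (M : Matrix (Fin 2 × Fin 2) (Fin 2 × Fin 2) ℂ) (a b : ι) :
    Matrix (ι → Fin 2) (ι → Fin 2) ℂ :=
  fun σ τ => M (σ a, σ b) (τ a, τ b) *
    (if ∀ y, y ≠ a → y ≠ b → σ y = τ y then 1 else 0)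

/-- The operator acting as the one-site matrix `A` on the tensor factor of the site `a`
and as the identity on all other factors. -/
def siteOp {ι : Type*} [Fintype ι] [DecidableEq ι]
    (A : Matrix (Fin 2) (Fin 2) ℂ) (a : ι) : Matrix (ι → Fin 2) (ι → Fin 2) ℂ :=
  fun σ τ => A (σ a) (τ a) * (if ∀ y, y ≠ a → σ y = τ y then 1 else 0)

/-- The finite XXZ kink chain Hamiltonian `H_L = Σ_{x=0}^{L−1} h(Δ)_{x,x+1}`
on `(ℂ²)^{⊗(L+1)}` (sites `0,…,L`). -/
def HChain (L : ℕ) (q : ℝ) : Matrix (Fin (L + 1) → Fin 2) (Fin (L + 1) → Fin 2) ℂ :=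
  ∑ x : Fin L, twoSiteOp (hKink q) x.castSucc x.succ

/-- The kink product vector `φ(z) = ⊗_{x=0}^{L}(|↑⟩ + z q^x |↓⟩)`. -/
def phi (L : ℕ) (q : ℝ) (z : ℂ) : (Fin (L + 1) → Fin 2) → ℂ :=
  fun σ => ∏ x : Fin (L + 1), (![1, z * (q : ℂ) ^ (x : ℕ)] : Fin 2 → ℂ) (σ x)

/-- The total third component of the spin, `S³_tot = Σ_{x=0}^{L} S³_x`. -/
def S3tot (L : ℕ) : Matrix (Fin (L + 1) → Fin 2) (Fin (L + 1) → Fin 2) ℂ :=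
  ∑ x : Fin (L + 1), siteOp S3 x

/-! The two-site Hamiltonian is `(1 + q²)⁻¹ |w⟩⟨w|` for the `q`-deformed singlet
`w = |↑↓⟩ − q|↓↑⟩`, i.e. the orthogonal projection onto `w`; so every term of `H_L`, and hence
`H_L`, is positive semidefinite. Each neighbouring pair of factors of `φ(z)` has the form
`(|↑⟩ + c|↓⟩) ⊗ (|↑⟩ + qc|↓⟩)`, which is orthogonal to `w`, so every term annihilates `φ(z)`.
A nonzero kernel vector puts `0` in the spectrum, and positivity puts the spectrum in `[0, ∞)`. -/

theorem Matrix.kronecker_mulVec_prod {R m n k l : Type*} [CommSemiring R] [Fintype n] [Fintype l]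
    (A : Matrix m n R) (B : Matrix k l R) (u : n → R) (w : l → R) :
    (A ⊗ₖ B) *ᵥ (fun p => u p.1 * w p.2) = fun p => (A *ᵥ u) p.1 * (B *ᵥ w) p.2 := by
  ext ⟨i, j⟩
  simp only [mulVec, dotProduct, Fintype.sum_prod_type, kroneckerMap_apply, Finset.sum_mul_sum]
  exact Finset.sum_congr rfl fun _ _ => Finset.sum_congr rfl fun _ _ => by ring

theorem Matrix.zero_mem_spectrum_of_mulVec_eq_zero {n K : Type*} [Fintype n] [DecidableEq n]
    [Field K] {M : Matrix n n K} {v : n → K} (hv : v ≠ 0) (hMv : M *ᵥ v = 0) :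
    (0 : K) ∈ spectrum K M :=
  (spectrum.zero_mem_iff K).mpr fun hM => hv <| mulVec_injective_iff_isUnit.mpr hM <| by
    rw [hMv, mulVec_zero]

theorem Fintype.prod_eq_mul_mul_prod_subtype_ne_ne {ι M : Type*} [Fintype ι] [DecidableEq ι]
    [CommMonoid M] {a b : ι} (hab : a ≠ b) (g : ι → M) :
    ∏ x, g x = g a * g b * ∏ y : {y : ι // y ≠ a ∧ y ≠ b}, g y := by
  have hb : b ∈ Finset.univ.erase a := Finset.mem_erase.mpr ⟨hab.symm, Finset.mem_univ b⟩
  rw [← Finset.mul_prod_erase Finset.univ g (Finset.mem_univ a),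
    ← Finset.mul_prod_erase _ g hb, ← mul_assoc]
  exact congrArg _ (Finset.prod_subtype _ (fun y => by simp [and_comm]) g)

section TwoSiteOp

variable {ι : Type*} [DecidableEq ι]

def splitTwoSites (α : Type*) {a b : ι} (hab : a ≠ b) :
    (ι → α) ≃ (α × α) × ({y : ι // y ≠ a ∧ y ≠ b} → α) where
  toFun σ := ((σ a, σ b), fun y => σ y)
  invFun p y := if h : y = a then p.1.1 else if h' : y = b then p.1.2 else p.2 ⟨y, h, h'⟩
  left_inv σ := by
    funext y
    by_cases h : y = a
    · subst h; simp
    · by_cases h' : y = b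
      · subst h'; simp [hab.symm]
      · simp [h, h']
  right_inv p := by
    ext y
    · simp
    · simp [hab.symm]
    · simp [y.2.1, y.2.2]

variable [Fintype ι]

theorem twoSiteOp_eq_submatrix (M : Matrix (Fin 2 × Fin 2) (Fin 2 × Fin 2) ℂ) {a b : ι}
    (hab : a ≠ b) :
    twoSiteOp M a b =
      (M ⊗ₖ 1).submatrix (splitTwoSites (Fin 2) hab) (splitTwoSites (Fin 2) hab) := by
  ext σ τ
  have hrest : (∀ y, y ≠ a → y ≠ b → σ y = τ y) ↔
      (fun y : {y : ι // y ≠ a ∧ y ≠ b} => σ y.1) = fun y => τ y.1 :=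
    ⟨fun h => funext fun y => h y y.2.1 y.2.2, fun h y ha hb => congrFun h ⟨y, ha, hb⟩⟩
  simp [twoSiteOp, splitTwoSites, one_apply, hrest]

theorem twoSiteOp_posSemidef {M : Matrix (Fin 2 × Fin 2) (Fin 2 × Fin 2) ℂ}
    (hM : M.PosSemidef) {a b : ι} (hab : a ≠ b) : (twoSiteOp M a b).PosSemidef := by
  rw [twoSiteOp_eq_submatrix M hab]
  exact (hM.kronecker PosSemidef.one).submatrix _

theorem twoSiteOp_mulVec_prod_eq_zero {M : Matrix (Fin 2 × Fin 2) (Fin 2 × Fin 2) ℂ}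
    {a b : ι} (hab : a ≠ b) (f : ι → Fin 2 → ℂ)
    (hM : M *ᵥ (fun p => f a p.1 * f b p.2) = 0) :
    twoSiteOp M a b *ᵥ (fun σ => ∏ x, f x (σ x)) = 0 := by
  rw [twoSiteOp_eq_submatrix M hab, submatrix_mulVec_equiv]
  have hsplit : (fun σ => ∏ x, f x (σ x)) ∘ (splitTwoSites (Fin 2) hab).symm =
      fun p => (f a p.1.1 * f b p.1.2) * ∏ y : {y : ι // y ≠ a ∧ y ≠ b}, f y (p.2 y) := by
    funext p
    rw [Function.comp_apply, Fintype.prod_eq_mul_mul_prod_subtype_ne_ne hab]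
    congr 1
    · simp [splitTwoSites, hab.symm]
    · exact Finset.prod_congr rfl fun y _ => by simp [splitTwoSites, y.2.1, y.2.2]
  rw [hsplit, kronecker_mulVec_prod M 1 (fun p => f a p.1 * f b p.2)
    (fun (ρ : {y : ι // y ≠ a ∧ y ≠ b} → Fin 2) => ∏ y, f y.1 (ρ y)), hM]
  funext σ
  simp

end TwoSiteOp

theorem Delta_inv (q : ℝ) : (Delta q)⁻¹ = 2 * q / (1 + q ^ 2) := by
  rcases eq_or_ne q 0 with rfl | hq
  · simp [Delta]
  · rw [Delta]; field_simp; ring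

def kinkVec (q : ℝ) : Fin 2 × Fin 2 → ℂ := Pi.single (0, 1) 1 - Pi.single (1, 0) (q : ℂ)

theorem hKink_eq_smul_vecMulVec (q : ℝ) :
    hKink q = (1 + q ^ 2)⁻¹ • vecMulVec (star (kinkVec q)) (kinkVec q) := by
  have hpos : (1 + (q : ℂ) ^ 2) ≠ 0 := by exact_mod_cast (by positivity : (1 + q ^ 2) ≠ 0)
  have hD : ((Delta q : ℂ))⁻¹ = 2 * q / (1 + q ^ 2) := by
    rw [← Complex.ofReal_inv, Delta_inv]; push_cast; rfl
  have hB : (Bfield q : ℂ) = (1 - q ^ 2) / (2 * (1 + q ^ 2)) := by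
    push_cast [Bfield]; rfl
  ext ⟨i, j⟩ ⟨k, l⟩
  fin_cases i <;> fin_cases j <;> fin_cases k <;> fin_cases l <;>
    simp [hKink, kinkVec, vecMulVec_apply, S1, S2, S3, kroneckerMap_apply, one_apply, hD, hB,
      Complex.real_smul, Prod.ext_iff] <;>
    field_simp <;> (try simp only [Complex.I_sq]) <;> ring

theorem hKink_posSemidef (q : ℝ) : (hKink q).PosSemidef := by
  rw [hKink_eq_smul_vecMulVec]
  exact (posSemidef_vecMulVec_star_self _).smul (by positivity)

theorem kinkVec_dotProduct (q : ℝ) (c : ℂ) :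
    kinkVec q ⬝ᵥ (fun p => ![1, c] p.1 * ![1, q * c] p.2) = 0 := by
  simp [kinkVec, dotProduct, Fintype.sum_prod_type, Prod.ext_iff]

theorem hKink_mulVec (q : ℝ) (c : ℂ) :
    hKink q *ᵥ (fun p => ![1, c] p.1 * ![1, q * c] p.2) = 0 := by
  rw [hKink_eq_smul_vecMulVec, smul_mulVec, vecMulVec_mulVec, kinkVec_dotProduct]
  simp

theorem HChain_posSemidef (L : ℕ) (q : ℝ) : (HChain L q).PosSemidef :=
  posSemidef_sum _ fun x _ => twoSiteOp_posSemidef (hKink_posSemidef q) x.castSucc_lt_succ.ne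

theorem HChain_mulVec_phi (L : ℕ) (q : ℝ) (z : ℂ) : HChain L q *ᵥ phi L q z = 0 := by
  rw [HChain, sum_mulVec]
  refine Finset.sum_eq_zero fun x _ => twoSiteOp_mulVec_prod_eq_zero x.castSucc_lt_succ.ne
    (fun y : Fin (L + 1) => ![1, z * q ^ (y : ℕ)]) ?_
  have hsucc : z * (q : ℂ) ^ ((x : ℕ) + 1) = q * (z * q ^ (x : ℕ)) := by ring
  simpa [hsucc] using hKink_mulVec q (z * q ^ (x : ℕ))

theorem phi_ne_zero (L : ℕ) (q : ℝ) (z : ℂ) : phi L q z ≠ 0 := fun h => by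
  simpa [phi] using congrFun h 0

theorem HChain_kink_ground_state_general (q : ℝ)
    (L : ℕ) (z : ℂ) :
    (HChain L q).mulVec (phi L q z) = 0 ∧ (HChain L q).PosSemidef ∧
      phi L q z ≠ 0 ∧
      (0 : ℂ) ∈ spectrum ℂ (HChain L q) ∧
      ∀ μ : ℂ, μ ∈ spectrum ℂ (HChain L q) → 0 ≤ μ.re := by
  have hker := HChain_mulVec_phi L q z
  have hpsd := HChain_posSemidef L q
  refine ⟨hker, hpsd, phi_ne_zero L q z,
    zero_mem_spectrum_of_mulVec_eq_zero (phi_ne_zero L q z) hker, fun μ hμ => ?_⟩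
  exact (Complex.nonneg_iff.mp ((posSemidef_iff_isHermitian_and_spectrum_nonneg.mp hpsd).2 hμ)).1

/-- For every `q ∈ (0,1)`, every `L ≥ 1` and every `z ∈ ℂ`, the kink
product vector `φ(z) = ⊗_{x=0}^{L}(|↑⟩ + z q^x |↓⟩)` satisfies `H_L φ(z) = 0`;
moreover `H_L` is positive semidefinite, so `0` is the smallest eigenvalue of `H_L`
and every `φ(z)` (being nonzero) is a ground state vector of `H_L`. -/
theorem HChain_kink_ground_state (q : ℝ) (hq0 : 0 < q) (hq1 : q < 1)
    (L : ℕ) (hL : 1 ≤ L) (z : ℂ) :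
    (HChain L q).mulVec (phi L q z) = 0 ∧ (HChain L q).PosSemidef ∧
      phi L q z ≠ 0 ∧
      (0 : ℂ) ∈ spectrum ℂ (HChain L q) ∧
      ∀ μ : ℂ, μ ∈ spectrum ℂ (HChain L q) → 0 ≤ μ.re :=
  HChain_kink_ground_state_general q L z
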